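/- Let k ≥ 3 be odd and let G be a finite group acting freely and tamely on S^k. For every n ≥ 1 and every 1 ≤ i ≤ n, there exists a continuous map λ_i : S^k → F_n^G(S^k) such that composing λ_i with the map ψ_n : F_n^G(S^k) → F_n(S^k/G) induced by the quotient, followed by projection onto the i-th coordinate, equals the quotient map q : S^k → S^k/G. -/

import Mathlib

/-- The standard `k`-sphere, as the unit sphere in `ℝ^{k+1}`. -/
abbrev Sph (k : ℕ) : Type := Metric.sphere (0 : EuclideanSpace ℝ (Fin (k + 1))) 1

/-- The `n`-th orbit configuration space of a `G`-space `X`: tuples `(x₁,…,x_n)` whose orbits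
`Gx_i` are pairwise disjoint (equivalently, with pairwise distinct images in `X/G`),
topologized as a subspace of `X^n`. -/
abbrev OrbitConf (G : Type) [Group G] (n : ℕ) (X : Type) [TopologicalSpace X]
    [MulAction G X] : Type :=
  {q : Fin n → X // ∀ i j : Fin n, i ≠ j →
    Quotient.mk (MulAction.orbitRel G X) (q i) ≠ Quotient.mk (MulAction.orbitRel G X) (q j)}

/-!
Since `k` is odd, `ℝ^{k+1} ≅ ℂ^{(k+1)/2}` isometrically, so unit complex numbers act on `S^k`
with `‖c • x - c' • x‖ = |c - c'|`. A free action of a finite group on a compact metric space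
displaces every point by at least some `δ > 0`, so distinct points at distance `< δ` lie in
distinct orbits. Hence for distinct unit complex numbers `c_1, …, c_n` pairwise closer than `δ`,
with `c_i = 1`, the map `x ↦ (c_1 • x, …, c_n • x)` lands in `F_n^G(S^k)` and its `i`-th
coordinate is `x`.
-/

open Function Metric Module Filter Topology

section FreeAction

variable {G X : Type*} [Group G] [Finite G] [MetricSpace X] [CompactSpace X] [MulAction G X]
  [ContinuousConstSMul G X]

theorem exists_pos_le_dist_smul_of_free (hfree : ∀ (g : G) (x : X), g • x = x → g = 1) :
    ∃ δ > 0, ∀ g : G, g ≠ 1 → ∀ x : X, δ ≤ dist x (g • x) := by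
  have hg : ∀ g : G, ∀ᶠ δ in 𝓝[>] (0 : ℝ), g ≠ 1 → ∀ x : X, δ ≤ dist x (g • x) := by
    intro g
    by_cases hg1 : g = 1
    · exact .of_forall fun _ h => absurd hg1 h
    obtain ⟨a, ha, hle⟩ := isCompact_univ.exists_forall_le'
      (continuous_id.dist (continuous_const_smul g)).continuousOn
      fun x _ => dist_pos.2 fun h => hg1 (hfree g x h.symm)
    filter_upwards [Ioo_mem_nhdsGT ha] with δ hδ _ x
    exact hδ.2.le.trans (hle x trivial)
  obtain ⟨δ, hδ, hle⟩ := ((eventually_all.2 hg).and self_mem_nhdsWithin).exists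
  exact ⟨δ, hle, hδ⟩

theorem exists_pos_mk_ne_of_dist_lt (hfree : ∀ (g : G) (x : X), g • x = x → g = 1) :
    ∃ δ > 0, ∀ x y : X, x ≠ y → dist x y < δ →
      Quotient.mk (MulAction.orbitRel G X) x ≠ Quotient.mk (MulAction.orbitRel G X) y := by
  obtain ⟨δ, hδ, hle⟩ := exists_pos_le_dist_smul_of_free hfree
  refine ⟨δ, hδ, fun x y hxy hdist hmk => ?_⟩
  obtain ⟨g, rfl⟩ : y ∈ MulAction.orbit G x := Quotient.exact hmk.symm
  have hg : g ≠ 1 := by rintro rfl; exact hxy (one_smul G x).symm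
  exact (hle g hg x).not_gt hdist

end FreeAction

def OrbitConf.mkOfDistLt {G X : Type} [Group G] [MetricSpace X] [MulAction G X] {n : ℕ} {δ : ℝ}
    (hδ : ∀ x y : X, x ≠ y → dist x y < δ →
      Quotient.mk (MulAction.orbitRel G X) x ≠ Quotient.mk (MulAction.orbitRel G X) y)
    (φ : Fin n → C(X, X)) (hinj : ∀ x, Injective (φ · x))
    (hdist : ∀ x j l, dist (φ j x) (φ l x) < δ) : C(X, OrbitConf G n X) where
  toFun x := ⟨fun j => φ j x, fun j l hjl => hδ _ _ ((hinj x).ne hjl) (hdist x j l)⟩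
  continuous_toFun := by fun_prop

theorem Circle.dist_eq_norm (a b : Circle) : dist a b = ‖(a : ℂ) - b‖ :=
  _root_.dist_eq_norm (a : ℂ) b

theorem Circle.dist_exp_exp_le (t s : ℝ) : dist (Circle.exp t) (Circle.exp s) ≤ |t - s| := by
  have h : (Circle.exp t : ℂ) = Circle.exp (t - s) * Circle.exp s := by
    rw [← Circle.coe_mul, ← Circle.exp_add, sub_add_cancel]
  rw [Circle.dist_eq_norm, h, ← sub_one_mul, norm_mul, Circle.norm_coe, mul_one,
    Circle.coe_exp, mul_comm, ← Real.norm_eq_abs]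
  exact_mod_cast Real.norm_exp_I_mul_ofReal_sub_one_le

theorem Fin.abs_cast_sub_cast_lt {n : ℕ} (j l : Fin n) : |(j : ℝ) - l| < n := by
  have hj : (j : ℝ) < n := by exact_mod_cast j.isLt
  have hl : (l : ℝ) < n := by exact_mod_cast l.isLt
  have hj0 : (0 : ℝ) ≤ j := j.val.cast_nonneg
  have hl0 : (0 : ℝ) ≤ l := l.val.cast_nonneg
  rw [abs_lt]
  constructor <;> linarith

theorem Circle.exists_injective_dist_lt {n : ℕ} (i : Fin n) {η : ℝ} (hη : 0 < η) :
    ∃ c : Fin n → Circle, Injective c ∧ c i = 1 ∧ ∀ j l, dist (c j) (c l) < η := by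
  have hn : (0 : ℝ) < n := by exact_mod_cast i.pos
  set θ := min η Real.pi / n
  have hθ : 0 < θ := by positivity
  have hθn : θ * n = min η Real.pi := div_mul_cancel₀ _ hn.ne'
  have hspread (j l : Fin n) : |θ * j - θ * l| < min η Real.pi := by
    rw [← mul_sub, abs_mul, abs_of_pos hθ, ← hθn]
    exact mul_lt_mul_of_pos_left (Fin.abs_cast_sub_cast_lt j l) hθ
  -- the angles stay in `(-π, π]`, where `Circle.exp` is injective
  have hmem (j : Fin n) : θ * j - θ * i ∈ Set.Ioc (-Real.pi) Real.pi := by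
    have := abs_lt.1 ((hspread j i).trans_le (min_le_right _ _))
    exact ⟨this.1, this.2.le⟩
  refine ⟨fun j => Circle.exp (θ * j - θ * i), fun j l hjl => ?_, by simp, fun j l => ?_⟩
  · have h := Circle.invOn_arg_exp.1.injOn (hmem j) (hmem l) hjl
    exact Fin.ext (by exact_mod_cast mul_left_cancel₀ hθ.ne' (sub_left_inj.1 h))
  · calc dist _ _ ≤ |(θ * j - θ * i) - (θ * l - θ * i)| := Circle.dist_exp_exp_le _ _
      _ < min η Real.pi := by rw [sub_sub_sub_cancel_right]; exact hspread j l
      _ ≤ η := min_le_left _ _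

theorem exists_linearIsometryEquiv_euclideanSpace_complex {N : ℕ} (hN : Even N) :
    ∃ m, Nonempty (EuclideanSpace ℝ (Fin N) ≃ₗᵢ[ℝ] EuclideanSpace ℂ (Fin m)) := by
  obtain ⟨m, rfl⟩ := hN
  let _ : InnerProductSpace ℝ (EuclideanSpace ℂ (Fin m)) := InnerProductSpace.complexToReal
  have h : finrank ℝ (EuclideanSpace ℂ (Fin m)) = m + m := by
    rw [finrank_real_of_complex, finrank_euclideanSpace_fin, two_mul]
  exact ⟨m, ⟨((stdOrthonormalBasis ℝ _).reindex (finCongr h)).repr.symm⟩⟩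

section SphereRotation

variable {V W : Type*} [NormedAddCommGroup V] [NormedSpace ℝ V] [NormedAddCommGroup W]
  [NormedSpace ℂ W] (E : V ≃ₗᵢ[ℝ] W) {r : ℝ}

noncomputable def sphereRotate (c : Circle) : C(sphere (0 : V) r, sphere (0 : V) r) where
  toFun x := ⟨E.symm (c • E x), by simp [Circle.norm_smul]⟩
  continuous_toFun := by fun_prop

theorem sphereRotate_one (x : sphere (0 : V) r) : sphereRotate E 1 x = x := by
  ext; simp [sphereRotate]

theorem dist_sphereRotate (c c' : Circle) (x : sphere (0 : V) r) :
    dist (sphereRotate E c x) (sphereRotate E c' x) = dist c c' * r := by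
  rw [Subtype.dist_eq, dist_eq_norm, Circle.dist_eq_norm]
  simp only [sphereRotate, ContinuousMap.coe_mk]
  rw [← map_sub, LinearIsometryEquiv.norm_map, Circle.smul_def, Circle.smul_def, ← sub_smul,
    norm_smul, LinearIsometryEquiv.norm_map, norm_eq_of_mem_sphere x]

theorem sphereRotate_left_injective (hr : r ≠ 0) (x : sphere (0 : V) r) :
    Injective fun c : Circle => sphereRotate E c x := by
  intro c c' (h : sphereRotate E c x = _)
  have := dist_sphereRotate E c c' x
  rwa [h, dist_self, eq_comm, mul_eq_zero, dist_eq_zero, or_iff_left hr] at this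

end SphereRotation

theorem stmt_15_general {k : ℕ} (hkodd : Odd k) (G : Type) [Group G] [Finite G]
    [MulAction G (Sph k)]
    (hcont : ∀ g : G, Continuous fun x : Sph k => g • x)
    (hfree : ∀ (g : G) (x : Sph k), g • x = x → g = 1)
    (n : ℕ) (i : Fin n) :
    ∃ lam : C(Sph k, OrbitConf G n (Sph k)),
      ∀ x : Sph k,
        Quotient.mk (MulAction.orbitRel G (Sph k)) ((lam x).val i) =
          Quotient.mk (MulAction.orbitRel G (Sph k)) x := by
  have : ContinuousConstSMul G (Sph k) := ⟨hcont⟩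
  obtain ⟨δ, hδ, hsep⟩ := exists_pos_mk_ne_of_dist_lt hfree
  obtain ⟨c, hc_inj, hci, hc_dist⟩ := Circle.exists_injective_dist_lt i hδ
  obtain ⟨m, ⟨E⟩⟩ := exists_linearIsometryEquiv_euclideanSpace_complex hkodd.add_one
  refine ⟨OrbitConf.mkOfDistLt hsep (fun j => sphereRotate E (c j))
    (fun x => (sphereRotate_left_injective E one_ne_zero x).comp hc_inj)
    (fun x j l => ?_), fun x => ?_⟩
  · rw [dist_sphereRotate, mul_one]
    exact hc_dist j l
  · simp [OrbitConf.mkOfDistLt, hci, sphereRotate_one]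

/-- Let `k ≥ 3` be odd and let `G` be a finite group acting freely, continuously
and tamely on `S^k`. For every `n ≥ 1` and every `i`, there is a continuous map
`λ_i : S^k → F_n^G(S^k)` such that composing `λ_i` with the map
`ψ_n : F_n^G(S^k) → F_n(S^k/G)` induced coordinatewise by the quotient map, followed by
projection onto the `i`-th coordinate, equals the quotient map `q : S^k → S^k/G`. -/
theorem stmt_15 {k : ℕ} (hk : 3 ≤ k) (hkodd : Odd k) (G : Type) [Group G] [Finite G]
    [MulAction G (Sph k)]
    (hcont : ∀ g : G, Continuous fun x : Sph k => g • x)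
    (hfree : ∀ (g : G) (x : Sph k), g • x = x → g = 1)
    (htame : Nonempty (ChartedSpace (EuclideanSpace ℝ (Fin k))
      (Quotient (MulAction.orbitRel G (Sph k)))))
    (n : ℕ) (hn : 1 ≤ n) (i : Fin n) :
    ∃ lam : C(Sph k, OrbitConf G n (Sph k)),
      ∀ x : Sph k,
        Quotient.mk (MulAction.orbitRel G (Sph k)) ((lam x).val i) =
          Quotient.mk (MulAction.orbitRel G (Sph k)) x :=
  stmt_15_general hkodd G hcont hfree n i
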